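/- There exists a universal constant C > 0 such that the following holds. Let n, m be positive integers and 0 < η < 1/2 with 1/η² ≥ 2. Suppose there is a pure-state quantum random access code for {−1,1}^n with m qubits and advantage η, i.e., unit vectors y_g ∈ ℂ^{2^m} for each g ∈ {−1,1}^n together with Hermitian matrices M_1, …, M_n ∈ ℂ^{2^m × 2^m} satisfying 0 ≼ M_i ≼ I, such that for every g and every i ∈ [n]: ⟨y_g, M_i y_g⟩ ≥ 1/2 + η if g_i = 1, and ⟨y_g, M_i y_g⟩ ≤ 1/2 − η if g_i = −1. Then m ≥ log₂ n − log₂ log₂(1/η²) − C. -/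

import Mathlib

/-!
The codewords `y_g` are unit vectors of `ℂ^{2^m}`, a real space of dimension `2^{m+1}`. Writing
`Mᵢ = BᴴB`, the condition `Mᵢ ≼ I` makes `B` a contraction, so `x ↦ ⟨x, Mᵢ x⟩ = ‖Bx‖²` is
`2`-Lipschitz on the unit ball; codewords differing in bit `i` are `2η` apart under this map, hence
`η` apart in norm. Disjoint balls of radius `η/2` around them fit in the ball of radius `1 + η/2`,
so comparing volumes gives `2ⁿ ≤ (1 + 2/η)^{2^{m+1}} ≤ (1/η²)^{2^{m+2}}`, and taking `log₂` twice
gives the bound with `C = 2`.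
-/

open Matrix MeasureTheory ProbabilityTheory
open scoped NNReal Kronecker ComplexOrder

/-- The spectral (operator) norm of a real square matrix. -/
noncomputable def specNorm {n : Type*} [Fintype n] [DecidableEq n] (A : Matrix n n ℝ) : ℝ :=
  ‖Matrix.toEuclideanCLM (𝕜 := ℝ) A‖

/-- The Frobenius norm of a real square matrix: `√(Tr(Aᵀ A))`. -/
noncomputable def frobNorm {n : Type*} [Fintype n] (A : Matrix n n ℝ) : ℝ :=
  Real.sqrt ((Aᵀ * A).trace)

/-- The trace inner product `⟨A, B⟩ = Tr(Aᵀ B)` of real square matrices. -/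
noncomputable def mInner {n : Type*} [Fintype n] (A B : Matrix n n ℝ) : ℝ :=
  (Aᵀ * B).trace

/-- The Euclidean (ℓ₂) norm of a vector in `ℝⁿ`. -/
noncomputable def l2norm {n : ℕ} (x : Fin n → ℝ) : ℝ := Real.sqrt (∑ i, (x i) ^ 2)

/-- The sign cube `{-1, 1}ⁿ` as a finite set of vectors in `ℝⁿ`. -/
noncomputable def signs (n : ℕ) : Finset (Fin n → ℝ) :=
  Fintype.piFinset fun _ => ({-1, 1} : Finset ℝ)

/-- The distribution of a `d × D` random matrix with i.i.d. Gaussian entries of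
mean `0` and variance `1/d`. -/
noncomputable def gaussMat (d D : ℕ) : Measure (Fin d → Fin D → ℝ) :=
  Measure.pi fun _ => Measure.pi fun _ => gaussianReal 0 (d : ℝ≥0)⁻¹

/-- The nuclear (trace) norm `Tr √(Mᵀ M)` of a real square matrix. -/
noncomputable def nucNorm {n : Type*} [Fintype n] [DecidableEq n] (M : Matrix n n ℝ) : ℝ :=
  ((Matrix.posSemidef_conjTranspose_mul_self M).1.eigenvectorUnitary.1 *
    diagonal ((RCLike.ofReal (K := ℝ)) ∘ Real.sqrt ∘
      (Matrix.posSemidef_conjTranspose_mul_self M).1.eigenvalues) *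
    (star (Matrix.posSemidef_conjTranspose_mul_self M).1.eigenvectorUnitary : Matrix n n ℝ)).trace

/-- The dual norm of a norm `N` on `ℝᵐ`: `‖y‖* = sup {⟨x, y⟩ : N x ≤ 1}`. -/
noncomputable def dualNorm {m : ℕ} (N : (Fin m → ℝ) → ℝ) (y : Fin m → ℝ) : ℝ :=
  sSup ((fun x => x ⬝ᵥ y) '' {x | N x ≤ 1})

/-- The binary entropy function (base 2). -/
noncomputable def binH (p : ℝ) : ℝ := -p * Real.logb 2 p - (1 - p) * Real.logb 2 (1 - p)

open Metric Module Finset WithLp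
open scoped ENNReal

theorem Finset.card_le_one_add_two_div_pow_finrank {E ι : Type*} [NormedAddCommGroup E]
    [NormedSpace ℝ E] [FiniteDimensional ℝ E] {ε : ℝ} (hε : 0 < ε) (s : Finset ι) (v : ι → E)
    (hv : ∀ i ∈ s, ‖v i‖ ≤ 1) (hsep : (s : Set ι).Pairwise fun i j => ε ≤ dist (v i) (v j)) :
    (#s : ℝ) ≤ (1 + 2 / ε) ^ finrank ℝ E := by
  borelize E
  let μ : Measure E := Measure.addHaar
  have hdisj : (s : Set ι).PairwiseDisjoint fun i => ball (v i) (ε / 2) := fun i hi j hj hij =>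
    ball_disjoint_ball (by linarith [hsep hi hj hij])
  have hsub : (⋃ i ∈ s, ball (v i) (ε / 2)) ⊆ ball 0 ((1 + 2 / ε) * (ε / 2)) := by
    refine Set.iUnion₂_subset fun i hi => ball_subset_ball' ?_
    rw [dist_zero_right]
    field_simp
    linarith [hv i hi]
  have hμ0 : μ (ball 0 (ε / 2)) ≠ 0 := (measure_ball_pos μ 0 (half_pos hε)).ne'
  have hμtop : μ (ball 0 (ε / 2)) ≠ ⊤ := measure_ball_lt_top.ne
  have key : (#s : ℝ≥0∞) * μ (ball 0 (ε / 2))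
      ≤ ENNReal.ofReal ((1 + 2 / ε) ^ finrank ℝ E) * μ (ball 0 (ε / 2)) :=
    calc (#s : ℝ≥0∞) * μ (ball 0 (ε / 2)) = μ (⋃ i ∈ s, ball (v i) (ε / 2)) := by
          rw [measure_biUnion_finset hdisj fun _ _ => measurableSet_ball]
          simp [Measure.addHaar_ball_center]
      _ ≤ μ (ball 0 ((1 + 2 / ε) * (ε / 2))) := measure_mono hsub
      _ = _ := Measure.addHaar_ball_mul_of_pos μ 0 (by positivity) _
  rw [ENNReal.mul_le_mul_iff_left hμ0 hμtop] at key
  exact_mod_cast (ENNReal.ofReal_le_ofReal_iff (by positivity)).1 (by simpa using key)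

theorem sq_norm_sub_sq_norm_le {F : Type*} [SeminormedAddCommGroup F] {u v : F} (hu : ‖u‖ ≤ 1)
    (hv : ‖v‖ ≤ 1) : ‖u‖ ^ 2 - ‖v‖ ^ 2 ≤ 2 * ‖u - v‖ := by
  nlinarith [norm_sub_norm_le u v, norm_nonneg u, norm_nonneg v, norm_nonneg (u - v)]

namespace Matrix

variable {𝕜 n : Type*} [RCLike 𝕜] [Fintype n]

theorem PosSemidef.exists_eq_conjTranspose_mul_self {M : Matrix n n 𝕜} (hM : M.PosSemidef) :
    ∃ B : Matrix n n 𝕜, M = Bᴴ * B := by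
  classical
  open scoped MatrixOrder in
  exact CStarAlgebra.nonneg_iff_eq_star_mul_self.mp hM.nonneg

theorem star_dotProduct_self_eq_norm_sq (x : n → 𝕜) :
    star x ⬝ᵥ x = (‖toLp 2 x‖ : 𝕜) ^ 2 := by
  rw [← inner_self_eq_norm_sq_to_K, EuclideanSpace.inner_toLp_toLp, dotProduct_comm]

theorem star_dotProduct_conjTranspose_mul_self_mulVec (B : Matrix n n 𝕜) (x : n → 𝕜) :
    star x ⬝ᵥ (Bᴴ * B) *ᵥ x = (‖toLp 2 (B *ᵥ x)‖ : 𝕜) ^ 2 := by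
  rw [← mulVec_mulVec, dotProduct_mulVec, vecMul_conjTranspose, star_star,
    ← star_dotProduct_self_eq_norm_sq]

theorem norm_toLp_mulVec_le_of_posSemidef_one_sub [DecidableEq n] {B : Matrix n n 𝕜}
    (hB : (1 - Bᴴ * B).PosSemidef) (x : n → 𝕜) : ‖toLp 2 (B *ᵥ x)‖ ≤ ‖toLp 2 x‖ := by
  have h := hB.dotProduct_mulVec_nonneg x
  rw [sub_mulVec, one_mulVec, dotProduct_sub, star_dotProduct_self_eq_norm_sq,
    star_dotProduct_conjTranspose_mul_self_mulVec, ← RCLike.ofReal_pow, ← RCLike.ofReal_pow,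
    ← RCLike.ofReal_sub, RCLike.ofReal_nonneg, sub_nonneg] at h
  exact (pow_le_pow_iff_left₀ (norm_nonneg _) (norm_nonneg _) two_ne_zero).1 h

theorem PosSemidef.re_dotProduct_mulVec_sub_le [DecidableEq n] {M : Matrix n n 𝕜}
    (hM : M.PosSemidef) (hM1 : (1 - M).PosSemidef) {x y : n → 𝕜} (hx : ‖toLp 2 x‖ ≤ 1)
    (hy : ‖toLp 2 y‖ ≤ 1) :
    RCLike.re (star x ⬝ᵥ M *ᵥ x) - RCLike.re (star y ⬝ᵥ M *ᵥ y) ≤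
      2 * dist (toLp 2 x) (toLp 2 y) := by
  obtain ⟨B, rfl⟩ := hM.exists_eq_conjTranspose_mul_self
  have hB (z : n → 𝕜) : ‖toLp 2 (B *ᵥ z)‖ ≤ ‖toLp 2 z‖ :=
    norm_toLp_mulVec_le_of_posSemidef_one_sub hM1 z
  simp only [star_dotProduct_conjTranspose_mul_self_mulVec, ← RCLike.ofReal_pow, RCLike.ofReal_re]
  calc ‖toLp 2 (B *ᵥ x)‖ ^ 2 - ‖toLp 2 (B *ᵥ y)‖ ^ 2
      ≤ 2 * ‖toLp 2 (B *ᵥ x) - toLp 2 (B *ᵥ y)‖ :=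
        sq_norm_sub_sq_norm_le ((hB x).trans hx) ((hB y).trans hy)
    _ ≤ 2 * dist (toLp 2 x) (toLp 2 y) := by
      rw [dist_eq_norm, ← toLp_sub, ← toLp_sub, ← mulVec_sub]
      gcongr
      exact hB _

end Matrix

theorem mem_signs {n : ℕ} {g : Fin n → ℝ} : g ∈ signs n ↔ ∀ i, g i = 1 ∨ g i = -1 := by
  simp [signs, or_comm]

theorem card_signs (n : ℕ) : #(signs n) = 2 ^ n := by
  simp [signs, card_pair (show (-1 : ℝ) ≠ 1 by norm_num)]

theorem finrank_real_euclideanSpace_complex (ι : Type*) [Fintype ι] :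
    finrank ℝ (EuclideanSpace ℂ ι) = 2 * Fintype.card ι := by
  rw [← finrank_mul_finrank ℝ ℂ, Complex.finrank_real_complex, finrank_euclideanSpace]

theorem one_add_two_div_le_one_div_sq_sq {η : ℝ} (hη : 0 < η) (hη2 : η < 1 / 2) :
    1 + 2 / η ≤ (1 / η ^ 2) ^ 2 := by
  have hcube : η ^ 3 < 1 / 8 := by
    calc η ^ 3 < (1 / 2) ^ 3 := by gcongr
      _ = 1 / 8 := by norm_num
  rw [div_pow, one_pow, ← pow_mul, one_add_div hη.ne', div_le_div_iff₀ hη (by positivity),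
    show (η + 2) * η ^ (2 * 2) = η * ((η + 2) * η ^ 3) by ring, one_mul]
  exact mul_le_of_le_one_right hη.le (by nlinarith [pow_pos hη 3, hcube])

theorem logb_le_of_two_pow_le {n m : ℕ} {η : ℝ} (hn : 0 < n) (hη : 0 < η) (hη2 : η < 1 / 2)
    (h : (2 : ℝ) ^ n ≤ (1 + 2 / η) ^ (2 * 2 ^ m)) :
    Real.logb 2 n ≤ m + 2 + Real.logb 2 (Real.logb 2 (1 / η ^ 2)) := by
  have hL : 0 < Real.logb 2 (1 / η ^ 2) := by
    refine Real.logb_pos one_lt_two ?_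
    rw [one_lt_div (by positivity)]
    nlinarith
  have hpow : (2 : ℝ) ^ n ≤ (1 / η ^ 2) ^ 2 ^ (m + 2) :=
    calc (2 : ℝ) ^ n ≤ (1 + 2 / η) ^ (2 * 2 ^ m) := h
      _ ≤ ((1 / η ^ 2) ^ 2) ^ (2 * 2 ^ m) := by
        gcongr
        exact one_add_two_div_le_one_div_sq_sq hη hη2
      _ = (1 / η ^ 2) ^ 2 ^ (m + 2) := by rw [← pow_mul]; ring
  have hlin : (n : ℝ) ≤ 2 ^ (m + 2) * Real.logb 2 (1 / η ^ 2) := by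
    simpa [Real.logb_pow] using Real.logb_le_logb_of_le one_lt_two (by positivity) hpow
  have := Real.logb_le_logb_of_le one_lt_two (by exact_mod_cast hn) hlin
  rwa [Real.logb_mul (by positivity) hL.ne', Real.logb_pow, Real.logb_self_eq_one one_lt_two,
    mul_one, Nat.cast_add, Nat.cast_two] at this

/-- Pure quantum case of Theorem 4.3, low-advantage bound.  If unit vectors
`y_g ∈ ℂ^{2^m}` together with two-outcome measurements `0 ≼ Mᵢ ≼ I` form a pure-state
quantum random access code for `{±1}ⁿ` with advantage `η`, then
`m ≥ log₂ n − log₂ log₂ (1/η²) − C`. -/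
theorem pure_qrac_lb_low_advantage :
    ∃ C : ℝ, 0 < C ∧
      ∀ (n m : ℕ) (η : ℝ), 0 < n → 0 < m →
        0 < η → η < 1 / 2 → 2 ≤ 1 / η ^ 2 →
        ∀ (y : (Fin n → ℝ) → (Fin (2 ^ m) → ℂ))
          (M : Fin n → Matrix (Fin (2 ^ m)) (Fin (2 ^ m)) ℂ),
          (∀ i, (M i).PosSemidef) →
          (∀ i, (1 - M i).PosSemidef) →
          (∀ g : Fin n → ℝ, (∀ i, g i = 1 ∨ g i = -1) →
            ∑ j, Complex.normSq (y g j) = 1) →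
          (∀ g : Fin n → ℝ, (∀ i, g i = 1 ∨ g i = -1) → ∀ i,
            (g i = 1 → 1 / 2 + η ≤ (star (y g) ⬝ᵥ (M i *ᵥ y g)).re) ∧
            (g i = -1 → (star (y g) ⬝ᵥ (M i *ᵥ y g)).re ≤ 1 / 2 - η)) →
          Real.logb 2 n - Real.logb 2 (Real.logb 2 (1 / η ^ 2)) - C ≤ (m : ℝ) := by
  refine ⟨2, two_pos, fun n m η hn _ hη hη2 _ y M hM hM1 hy hdec => ?_⟩
  let v (g : Fin n → ℝ) : EuclideanSpace ℂ (Fin (2 ^ m)) := toLp 2 (y g)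
  have hunit : ∀ g ∈ signs n, ‖v g‖ = 1 := fun g hg => by
    simp [v, EuclideanSpace.norm_eq, Complex.sq_norm, hy g (mem_signs.1 hg)]
  have hflip : ∀ g ∈ signs n, ∀ g' ∈ signs n, ∀ i, g i = 1 → g' i = -1 →
      η ≤ dist (v g) (v g') := by
    intro g hg g' hg' i hgi hg'i
    have := (hM i).re_dotProduct_mulVec_sub_le (hM1 i) (hunit g hg).le (hunit g' hg').le
    simp only [RCLike.re_to_complex] at this
    linarith [(hdec g (mem_signs.1 hg) i).1 hgi, (hdec g' (mem_signs.1 hg') i).2 hg'i]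
  have hsep : (signs n : Set (Fin n → ℝ)).Pairwise fun g g' => η ≤ dist (v g) (v g') := by
    intro g hg g' hg' hne
    obtain ⟨i, hi⟩ := Function.ne_iff.mp hne
    rcases mem_signs.1 hg i with hgi | hgi <;> rcases mem_signs.1 hg' i with hg'i | hg'i
    · exact absurd (hgi.trans hg'i.symm) hi
    · exact hflip g hg g' hg' i hgi hg'i
    · rw [dist_comm]
      exact hflip g' hg' g hg i hg'i hgi
    · exact absurd (hgi.trans hg'i.symm) hi
  have hpack :=
    card_le_one_add_two_div_pow_finrank hη (signs n) v (fun g hg => (hunit g hg).le) hsep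
  rw [card_signs, finrank_real_euclideanSpace_complex, Fintype.card_fin] at hpack
  linarith [logb_le_of_two_pow_le hn hη hη2 (by exact_mod_cast hpack)]
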